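/- Let m ≥ 4 and let a, b, c ∈ V = 𝔽₂^{2m} be linearly independent over 𝔽₂. Then for any ε₁, ε₂, ε₃ ∈ 𝔽₂, the quadratic form θ₀ is not constant on the set L(a,ε₁) ∩ L(b,ε₂) ∩ L(c,ε₃), where L(x,ε) = {v ∈ V : φ(v,x) = ε}; that is, there exist w, w′ ∈ V with φ(w,a) = φ(w′,a) = ε₁, φ(w,b) = φ(w′,b) = ε₂, φ(w,c) = φ(w′,c) = ε₃, and θ₀(w) ≠ θ₀(w′). -/

import Mathlib

open Matrix

/-- Row vectors in `𝔽₂^{2m}`, with coordinates indexed by `Fin m ⊕ Fin m`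
(the first block and the second block of `m` coordinates). -/
abbrev Vm (m : ℕ) := (Fin m ⊕ Fin m) → ZMod 2

/-- The block matrix `e = (0 Iₘ; 0 0)`. -/
def eMat (m : ℕ) : Matrix (Fin m ⊕ Fin m) (Fin m ⊕ Fin m) (ZMod 2) :=
  Matrix.fromBlocks 0 1 0 0

/-- The block matrix `f = e + eᵀ = (0 Iₘ; Iₘ 0)`. -/
def fMat (m : ℕ) : Matrix (Fin m ⊕ Fin m) (Fin m ⊕ Fin m) (ZMod 2) :=
  eMat m + (eMat m)ᵀ

/-- The alternating bilinear form `φ(u,v) = u f vᵀ`. -/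
def phi (m : ℕ) (u v : Vm m) : ZMod 2 := u ⬝ᵥ (fMat m).mulVec v

/-- The quadratic form `θ₀(u) = u e uᵀ`. -/
def theta0 (m : ℕ) (u : Vm m) : ZMod 2 := u ⬝ᵥ (eMat m).mulVec u

/-- The quadratic form `θ_a(u) = θ₀(u) + φ(u,a)`. -/
def theta (m : ℕ) (a u : Vm m) : ZMod 2 := theta0 m u + phi m u a

/-- The transvection `t_c : u ↦ u + φ(u,c)·c`. -/
def tvec (m : ℕ) (c u : Vm m) : Vm m := u + phi m u c • c

/-!
The admissible vectors form a coset `w + W` of `W = ⟨a, b, c⟩^⊥`: it is nonempty because `φ` is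
nondegenerate and `a, b, c` are independent. As `dim W = 2m - 3 > m`, the subspace `W` is not
totally isotropic, so it contains `u, u'` with `φ(u, u') = 1`. Since `φ` is the polar form of
`θ₀`, the second difference `θ₀(w) + θ₀(w + u) + θ₀(w + u') + θ₀(w + u + u')` equals
`φ(u, u') = 1`, so `θ₀` is not constant on `w + {0, u, u', u + u'} ⊆ w + W`.
-/

namespace LinearMap.BilinForm

variable {K V ι : Type*} [Field K] [AddCommGroup V] [Module K V] [FiniteDimensional K V]
  {B : LinearMap.BilinForm K V}

theorem exists_apply_eq_of_linearIndependent [Fintype ι] (hB : B.Nondegenerate) {x : ι → V}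
    (hx : LinearIndependent K x) (ε : ι → K) : ∃ v, ∀ i, B (x i) v = ε i := by
  let T : V →ₗ[K] ι → K := LinearMap.pi fun i => B (x i)
  have hker : LinearMap.ker T ≤ B.orthogonal (Submodule.span K (Set.range x)) := by
    intro v hv n hn
    have hspan : Submodule.span K (Set.range x) ≤ LinearMap.ker (B.flip v) :=
      Submodule.span_le.2 <| Set.range_subset_iff.2 fun i =>
        _root_.congr_fun (LinearMap.mem_ker.1 hv) i
    exact hspan hn
  have hrange : LinearMap.range T = ⊤ := by
    apply Submodule.eq_top_of_finrank_eq
    have hker_le := Submodule.finrank_mono hker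
    rw [finrank_orthogonal hB, finrank_span_eq_card hx] at hker_le
    have hcard := hx.fintype_card_le_finrank
    have hrange_le := (LinearMap.range T).finrank_le
    simp only [Module.finrank_fintype_fun_eq_card] at hrange_le ⊢
    have := T.finrank_range_add_finrank_ker
    omega
  obtain ⟨v, hv⟩ := LinearMap.range_eq_top.1 hrange ε
  exact ⟨v, _root_.congr_fun hv⟩

theorem exists_mem_apply_ne_zero_of_finrank_lt (hB : B.Nondegenerate) {W : Submodule K V}
    (hW : Module.finrank K V < 2 * Module.finrank K W) : ∃ u ∈ W, ∃ u' ∈ W, B u u' ≠ 0 := by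
  by_contra! hiso
  have hW_le : W ≤ B.orthogonal W := fun u' hu' u hu => hiso u hu u' hu'
  have h := Submodule.finrank_mono hW_le
  rw [finrank_orthogonal hB] at h
  omega

end LinearMap.BilinForm

lemma fMat_eq_fromBlocks (m : ℕ) : fMat m = Matrix.fromBlocks 0 1 1 0 := by
  simp [fMat, eMat, Matrix.fromBlocks_transpose, Matrix.fromBlocks_add]

lemma fMat_mul_self (m : ℕ) : fMat m * fMat m = 1 := by
  simp [fMat_eq_fromBlocks, Matrix.fromBlocks_multiply, Matrix.fromBlocks_one]

lemma fMat_isSymm (m : ℕ) : (fMat m).IsSymm := by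
  simp [Matrix.IsSymm, fMat_eq_fromBlocks, Matrix.fromBlocks_transpose]

lemma toBilin'_fMat_nondegenerate (m : ℕ) : (fMat m).toBilin'.Nondegenerate := by
  refine LinearMap.BilinForm.nondegenerate_toBilin'_of_det_ne_zero' _ fun h => ?_
  simpa [h] using congrArg Matrix.det (fMat_mul_self m)

section

variable {m : ℕ}

lemma phi_eq_toBilin' (u v : Vm m) : phi m u v = (fMat m).toBilin' u v :=
  (Matrix.toBilin'_apply' _ u v).symm

lemma phi_comm (u v : Vm m) : phi m u v = phi m v u := by
  simp only [phi_eq_toBilin']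
  exact (Matrix.isSymm_toBilin'_iff_isSymm.2 (fMat_isSymm m)).eq u v

lemma phi_add_left (u u' v : Vm m) : phi m (u + u') v = phi m u v + phi m u' v := by
  simp only [phi_eq_toBilin', map_add, LinearMap.add_apply]

lemma phi_add_of_mem_orthogonal {N : Submodule (ZMod 2) (Vm m)} {x y : Vm m} (hx : x ∈ N)
    (hy : y ∈ (fMat m).toBilin'.orthogonal N) (w : Vm m) : phi m (w + y) x = phi m w x := by
  rw [phi_add_left, phi_comm y, phi_eq_toBilin' x y, hy x hx, add_zero]

lemma theta0_add (u v : Vm m) : theta0 m (u + v) = theta0 m u + theta0 m v + phi m u v := by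
  have h : u ⬝ᵥ (eMat m)ᵀ *ᵥ v = v ⬝ᵥ eMat m *ᵥ u := by
    rw [Matrix.dotProduct_mulVec, Matrix.vecMul_transpose, dotProduct_comm]
  simp only [theta0, phi, fMat, Matrix.add_mulVec, Matrix.mulVec_add, dotProduct_add,
    add_dotProduct, h]
  ring

lemma theta0_second_difference (w u u' : Vm m) :
    theta0 m w + theta0 m (w + u) + theta0 m (w + u') + theta0 m (w + (u + u')) = phi m u u' := by
  simp only [theta0_add, phi_eq_toBilin', map_add]
  -- every term except `φ(u, u')` occurs an even number of times
  grind

lemma exists_theta0_add_ne (w : Vm m) {u u' : Vm m} (h : phi m u u' ≠ 0) :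
    ∃ y ∈ ({u, u', u + u'} : Set (Vm m)), theta0 m (w + y) ≠ theta0 m w := by
  by_contra! hconst
  simp only [Set.mem_insert_iff, Set.mem_singleton_iff, forall_eq_or_imp, forall_eq] at hconst
  obtain ⟨hu, hu', huu'⟩ := hconst
  apply h
  rw [← theta0_second_difference w u u', hu, hu', huu', CharTwo.add_self_eq_zero, zero_add,
    CharTwo.add_self_eq_zero]

end

theorem stmt_6 (m : ℕ) (hm : 4 ≤ m) (a b c : Vm m)
    (hind : LinearIndependent (ZMod 2) ![a, b, c])
    (ε₁ ε₂ ε₃ : ZMod 2) :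
    ∃ w w' : Vm m,
      phi m w a = ε₁ ∧ phi m w' a = ε₁ ∧
      phi m w b = ε₂ ∧ phi m w' b = ε₂ ∧
      phi m w c = ε₃ ∧ phi m w' c = ε₃ ∧
      theta0 m w ≠ theta0 m w' := by
  have hB := toBilin'_fMat_nondegenerate m
  obtain ⟨w, hw⟩ :=
    LinearMap.BilinForm.exists_apply_eq_of_linearIndependent hB hind ![ε₁, ε₂, ε₃]
  set W := (fMat m).toBilin'.orthogonal (Submodule.span (ZMod 2) (Set.range ![a, b, c]))
  have hW : Module.finrank (ZMod 2) (Vm m) < 2 * Module.finrank (ZMod 2) W := by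
    rw [LinearMap.BilinForm.finrank_orthogonal hB, finrank_span_eq_card hind]
    simp only [Module.finrank_fintype_fun_eq_card, Fintype.card_sum, Fintype.card_fin]
    omega
  obtain ⟨u, hu, u', hu', huu'⟩ :=
    LinearMap.BilinForm.exists_mem_apply_ne_zero_of_finrank_lt hB hW
  obtain ⟨y, hy, hθ⟩ := exists_theta0_add_ne w ((phi_eq_toBilin' u u').trans_ne huu')
  have hyW : y ∈ W := by
    rcases hy with rfl | rfl | rfl
    exacts [hu, hu', W.add_mem hu hu']
  have hsol (i : Fin 3) : phi m w (![a, b, c] i) = ![ε₁, ε₂, ε₃] i := by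
    rw [phi_comm, phi_eq_toBilin', hw i]
  have hsol_shift (i : Fin 3) : phi m (w + y) (![a, b, c] i) = ![ε₁, ε₂, ε₃] i :=
    (phi_add_of_mem_orthogonal (Submodule.subset_span (Set.mem_range_self i)) hyW w).trans (hsol i)
  exact ⟨w + y, w, hsol_shift 0, hsol 0, hsol_shift 1, hsol 1, hsol_shift 2, hsol 2, hθ⟩
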